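/- arXiv:2012.01005 — 2 statements merged into one kernel-verified Lean document; each statement's English description precedes it below -/
import Mathlib

section
/- Let c, L, E, I > 0 and a > 0 with a ≠ 16 be reals, let z ∈ ℝ, and let P ≥ 1 be an integer. Then Σ_{i=1}^P (a^{i−1}/(E·I)) ∫_0^{L·2^{1−i}} (Q_i(z) − c·x) · c·2^{−i}·(L·2^{1−i} − x) dx = (20·c²·L³/(3·E·I·a)) · (1 − (a/16)^P)/((16/a) − 1) − (c²·L³/(E·I)) · Σ_{i=1}^P (a/16)^{i−1} σ(2^{i−1} z), where Q_i(z) = 4·c·L·(2^{−i} − σ(2^{i−1} z)/2^{i−1}). -/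
open Filter

/-- Distance from a real number to the nearest integer: σ(x) = min_{k∈ℤ} |x − k|. -/
noncomputable def distNearInt (x : ℝ) : ℝ := ⨅ k : ℤ, |x - k|

/-!
On level `i` the virtual moment is linear and the real moment vanishes at the free end of a bar of
length `ℓ = L 2^{1-i}`, so each integral is the elementary `∫₀^ℓ (A - c x) k (ℓ - x) dx`. Evaluated,
level `i` contributes `c² L³ (5/12 - σ(2^{i-1} z)) / 16^{i-1}`, and weighting by `a^{i-1}` turns the
`5/12` parts into a geometric series of ratio `a/16`.
-/

open Finset

theorem Finset.sum_Icc_one_sub_one {M : Type*} [AddCommMonoid M] (f : ℕ → M) (n : ℕ) :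
    ∑ i ∈ Icc 1 n, f (i - 1) = ∑ i ∈ range n, f i := by
  rw [← Ico_add_one_right_eq_Icc, sum_Ico_eq_sum_range]
  simp

theorem integral_sub_mul_mul_sub (A c k ℓ : ℝ) :
    ∫ x in (0:ℝ)..ℓ, (A - c * x) * (k * (ℓ - x)) = k * A * ℓ ^ 2 / 2 - k * c * ℓ ^ 3 / 6 := by
  have hderiv : ∀ x ∈ Set.uIcc (0:ℝ) ℓ,
      HasDerivAt (fun x => k * (A * ℓ * x - (A + c * ℓ) * x ^ 2 / 2 + c * x ^ 3 / 3))
        ((A - c * x) * (k * (ℓ - x))) x := by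
    intro x _
    refine (((((hasDerivAt_id x).const_mul (A * ℓ)).sub
      (((hasDerivAt_pow 2 x).const_mul (A + c * ℓ)).div_const 2)).add
      (((hasDerivAt_pow 3 x).const_mul c).div_const 3)).const_mul k).congr_deriv ?_
    norm_num
    ring
  rw [intervalIntegral.integral_eq_sub_of_hasDerivAt hderiv
    (Continuous.intervalIntegrable (by fun_prop) _ _)]
  ring

theorem integral_bending_level (c L s : ℝ) {i : ℕ} (hi : i ≠ 0) :
    ∫ x in (0:ℝ)..(L * 2 ^ ((1:ℤ) - (i:ℤ))),
        (4 * c * L * (2 ^ (-(i:ℤ)) - s / 2 ^ (i - 1)) - c * x) *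
          (c * 2 ^ (-(i:ℤ)) * (L * 2 ^ ((1:ℤ) - (i:ℤ)) - x)) =
      c ^ 2 * L ^ 3 * (5 / 12 - s) / 16 ^ (i - 1) := by
  have hi' : 1 ≤ i := Nat.one_le_iff_ne_zero.2 hi
  have hu : (2:ℝ) ^ i ≠ 0 := by positivity
  have h_neg : (2:ℝ) ^ (-(i:ℤ)) = (2 ^ i)⁻¹ := by rw [zpow_neg, zpow_natCast]
  have h_one_sub : (2:ℝ) ^ ((1:ℤ) - i) = 2 / 2 ^ i := by
    rw [zpow_sub₀ two_ne_zero, zpow_one, zpow_natCast]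
  have h_two : (2:ℝ) ^ (i - 1) = 2 ^ i / 2 := by
    rw [pow_sub₀ _ two_ne_zero hi', pow_one, div_eq_mul_inv]
  have h_sixteen : (16:ℝ) ^ (i - 1) = (2 ^ i) ^ 4 / 16 := by
    rw [pow_sub₀ _ (by norm_num) hi', pow_one, div_eq_mul_inv, ← pow_mul, mul_comm i 4, pow_mul]
    norm_num
  rw [integral_sub_mul_mul_sub, h_neg, h_one_sub, h_two, h_sixteen]
  field_simp
  ring

theorem vertical_bending_term_general (c L E I a : ℝ) (ha : 0 < a) (ha16 : a ≠ 16) (z : ℝ) (P : ℕ) :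
    ∑ i ∈ Finset.Icc 1 P, (a ^ (i - 1) / (E * I)) *
      ∫ x in (0:ℝ)..(L * 2 ^ ((1:ℤ) - (i:ℤ))),
        (4 * c * L * (2 ^ (-(i:ℤ)) - distNearInt (2 ^ (i - 1) * z) / 2 ^ (i - 1)) - c * x) *
          (c * 2 ^ (-(i:ℤ)) * (L * 2 ^ ((1:ℤ) - (i:ℤ)) - x)) =
    (20 * c ^ 2 * L ^ 3 / (3 * E * I * a)) * ((1 - (a / 16) ^ P) / (16 / a - 1)) -
      (c ^ 2 * L ^ 3 / (E * I)) *
        ∑ i ∈ Finset.Icc 1 P, (a / 16) ^ (i - 1) * distNearInt (2 ^ (i - 1) * z) := by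
  have h_level : ∀ i ∈ Icc 1 P,
      a ^ (i - 1) / (E * I) *
        ∫ x in (0:ℝ)..(L * 2 ^ ((1:ℤ) - (i:ℤ))),
          (4 * c * L * (2 ^ (-(i:ℤ)) - distNearInt (2 ^ (i - 1) * z) / 2 ^ (i - 1)) - c * x) *
            (c * 2 ^ (-(i:ℤ)) * (L * 2 ^ ((1:ℤ) - (i:ℤ)) - x)) =
      c ^ 2 * L ^ 3 / (E * I) * (5 / 12 * (a / 16) ^ (i - 1) -
        (a / 16) ^ (i - 1) * distNearInt (2 ^ (i - 1) * z)) := by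
    intro i hi
    rw [integral_bending_level _ _ _ (by grind), div_pow]
    ring
  have h_ratio : a / 16 ≠ 1 := fun h => ha16 ((div_eq_one_iff_eq (by norm_num)).1 h)
  have h_geom : 5 / 12 * (((a / 16) ^ P - 1) / (a / 16 - 1)) =
      20 / (3 * a) * ((1 - (a / 16) ^ P) / (16 / a - 1)) := by
    have : a - 16 ≠ 0 := sub_ne_zero.2 ha16
    have : 16 - a ≠ 0 := sub_ne_zero.2 ha16.symm
    field_simp
    ring
  rw [sum_congr rfl h_level, ← mul_sum, sum_sub_distrib, ← mul_sum,
    sum_Icc_one_sub_one (fun j => (a / 16) ^ j), geom_sum_eq h_ratio, h_geom]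
  ring

/-- Bending-moment term of the PVW for vertical displacements of an end node at `z`
in a binary tree structure with `P` levels, for `a ≠ 16`. -/
theorem vertical_bending_term (c L E I a : ℝ) (hc : 0 < c) (hL : 0 < L) (hE : 0 < E)
    (hI : 0 < I) (ha : 0 < a) (ha16 : a ≠ 16) (z : ℝ) (P : ℕ) (hP : 1 ≤ P) :
    ∑ i ∈ Finset.Icc 1 P, (a ^ (i - 1) / (E * I)) *
      ∫ x in (0:ℝ)..(L * 2 ^ ((1:ℤ) - (i:ℤ))),
        (4 * c * L * (2 ^ (-(i:ℤ)) - distNearInt (2 ^ (i - 1) * z) / 2 ^ (i - 1)) - c * x) *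
          (c * 2 ^ (-(i:ℤ)) * (L * 2 ^ ((1:ℤ) - (i:ℤ)) - x)) =
    (20 * c ^ 2 * L ^ 3 / (3 * E * I * a)) * ((1 - (a / 16) ^ P) / (16 / a - 1)) -
      (c ^ 2 * L ^ 3 / (E * I)) *
        ∑ i ∈ Finset.Icc 1 P, (a / 16) ^ (i - 1) * distNearInt (2 ^ (i - 1) * z) :=
  vertical_bending_term_general c L E I a ha ha16 z P
end

section
/- Let c, s, L, E, I, A, A*, G > 0 and a, u, v > 0 with a ≠ 16, u ≠ 4, v ≠ 4 be reals, let z ∈ ℝ, and let P ≥ 1 be an integer. Then V(P,z) = (20·c²·L³/(3·E·I·a))·(1 − (a/16)^P)/((16/a) − 1) − (c²·L³/(E·I))·Σ_{i=1}^P (a/16)^{i−1} σ(2^{i−1} z) + (2·s²·L/(E·A·u))·(1 − (u/4)^P)/((4/u) − 1) + (2·c²·L/(G·A*·v))·(1 − (v/4)^P)/((4/v) − 1). -/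
/-- Vertical displacement per unit load of the end node located at `z` in a binary tree
structure with `P` levels, from the Principle of Virtual Work (bending + axial + shear). -/
noncomputable def Vdisp (c s L E I A A' G a u v z : ℝ) (P : ℕ) : ℝ :=
  (∑ i ∈ Finset.Icc 1 P, (a ^ (i - 1) / (E * I)) *
      ∫ x in (0:ℝ)..(L * 2 ^ ((1:ℤ) - (i:ℤ))),
        (4 * c * L * (2 ^ (-(i:ℤ)) - distNearInt (2 ^ (i - 1) * z) / 2 ^ (i - 1)) - c * x) *
          (c * 2 ^ (-(i:ℤ)) * (L * 2 ^ ((1:ℤ) - (i:ℤ)) - x))) +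
  (∑ i ∈ Finset.Icc 1 P,
      s ^ 2 * 2 ^ (-(i:ℤ)) * L * 2 ^ ((1:ℤ) - (i:ℤ)) * u ^ (i - 1) / (E * A)) +
  (∑ i ∈ Finset.Icc 1 P,
      c ^ 2 * 2 ^ (-(i:ℤ)) * L * 2 ^ ((1:ℤ) - (i:ℤ)) * v ^ (i - 1) / (G * A'))

/-!
Reindex the levels by `n = i - 1`. The members of level `n` have length `L / 2ⁿ`, so the bending
integral is a cubic in `L / 2ⁿ` and contributes `c²L³/(EI) · (a/16)ⁿ · (5/12 - σ(2ⁿ z))`, while the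
axial and shear terms contribute `s²L/(2EA) · (u/4)ⁿ` and `c²L/(2GA*) · (v/4)ⁿ`. Summing the three
geometric series over `n < P` gives the closed form.
-/

open Finset

theorem sum_Icc_one_eq_sum_range {M : Type*} [AddCommMonoid M] (f : ℕ → M) (P : ℕ) :
    ∑ i ∈ Icc 1 P, f i = ∑ n ∈ range P, f (n + 1) := by
  rw [range_eq_Ico, sum_Ico_add', ← Ico_add_one_right_eq_Icc]

theorem mul_geom_sum_eq_div_inv_sub_one {K : Type*} [Field K] {r : K} (hr₀ : r ≠ 0)
    (hr₁ : r ≠ 1) (P : ℕ) : r * ∑ n ∈ range P, r ^ n = (1 - r ^ P) / (r⁻¹ - 1) := by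
  have : r⁻¹ - 1 ≠ 0 := sub_ne_zero.mpr (inv_ne_one.mpr hr₁)
  rw [geom_sum_eq hr₁]
  field_simp
  ring

theorem zpow_neg_natCast_succ {K : Type*} [Field K] (x : K) (n : ℕ) :
    x ^ (-((n + 1 : ℕ) : ℤ)) = (x ^ n)⁻¹ / x := by
  rw [zpow_neg, zpow_natCast, pow_succ, mul_inv, div_eq_mul_inv]

theorem zpow_one_sub_natCast_succ {K : Type*} [Field K] (x : K) (n : ℕ) :
    x ^ ((1 : ℤ) - ((n + 1 : ℕ) : ℤ)) = (x ^ n)⁻¹ := by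
  rw [Nat.cast_succ, sub_add_cancel_right, zpow_neg, zpow_natCast]

theorem integral_sub_mul_const_mul_sub (Q c d K : ℝ) :
    ∫ x in (0:ℝ)..K, (Q - c * x) * (d * (K - x)) = d * (Q * K ^ 2 / 2 - c * K ^ 3 / 6) := by
  have hexpand (x : ℝ) :
      (Q - c * x) * (d * (K - x)) = d * (Q * K) - d * (Q + c * K) * x + d * c * x ^ 2 := by
    ring
  have hint {f : ℝ → ℝ} (hf : Continuous f) : IntervalIntegrable f MeasureTheory.volume 0 K :=
    hf.intervalIntegrable 0 K
  simp only [hexpand]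
  rw [intervalIntegral.integral_add (hint (by fun_prop)) (hint (by fun_prop)),
    intervalIntegral.integral_sub (hint (by fun_prop)) (hint (by fun_prop)),
    intervalIntegral.integral_const, intervalIntegral.integral_const_mul,
    intervalIntegral.integral_const_mul, integral_id, integral_pow, smul_eq_mul]
  ring

theorem bending_term_eq (c L E I a σ : ℝ) (n : ℕ) :
    a ^ n / (E * I) * ∫ x in (0:ℝ)..L * (2 ^ n)⁻¹,
        (4 * c * L * ((2 ^ n)⁻¹ / 2 - σ / 2 ^ n) - c * x) *
          (c * ((2 ^ n)⁻¹ / 2) * (L * (2 ^ n)⁻¹ - x))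
      = c ^ 2 * L ^ 3 / (E * I) * (5 / 12 * (a / 16) ^ n - (a / 16) ^ n * σ) := by
  rw [integral_sub_mul_const_mul_sub, div_pow, show (16 : ℝ) ^ n = ((2 : ℝ) ^ n) ^ 4 by
    rw [← pow_mul, mul_comm, pow_mul]; norm_num]
  ring

theorem axial_shear_term_eq (p L D x : ℝ) (n : ℕ) :
    p * ((2 ^ n)⁻¹ / 2) * L * (2 ^ n)⁻¹ * x ^ n / D = p * L / (2 * D) * (x / 4) ^ n := by
  rw [div_pow, show (4 : ℝ) ^ n = ((2 : ℝ) ^ n) ^ 2 by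
    rw [← pow_mul, mul_comm, pow_mul]; norm_num]
  ring

theorem Vdisp_eq_sum_range (c s L E I A A' G a u v z : ℝ) (P : ℕ) :
    Vdisp c s L E I A A' G a u v z P =
      c ^ 2 * L ^ 3 / (E * I) * (5 / 12 * ∑ n ∈ range P, (a / 16) ^ n -
        ∑ n ∈ range P, (a / 16) ^ n * distNearInt (2 ^ n * z)) +
      s ^ 2 * L / (2 * (E * A)) * ∑ n ∈ range P, (u / 4) ^ n +
      c ^ 2 * L / (2 * (G * A')) * ∑ n ∈ range P, (v / 4) ^ n := by
  simp only [Vdisp, sum_Icc_one_eq_sum_range, Nat.add_sub_cancel, zpow_neg_natCast_succ,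
    zpow_one_sub_natCast_succ, bending_term_eq, axial_shear_term_eq, ← mul_sum, sum_sub_distrib]

theorem vertical_displacement_finite_general (c s L E I A A' G a u v : ℝ)
    (ha : 0 < a) (hu : 0 < u) (hv : 0 < v)
    (ha16 : a ≠ 16) (hu4 : u ≠ 4) (hv4 : v ≠ 4) (z : ℝ) (P : ℕ) :
    Vdisp c s L E I A A' G a u v z P =
      (20 * c ^ 2 * L ^ 3 / (3 * E * I * a)) * ((1 - (a / 16) ^ P) / (16 / a - 1)) -
        (c ^ 2 * L ^ 3 / (E * I)) *
          (∑ i ∈ Finset.Icc 1 P, (a / 16) ^ (i - 1) * distNearInt (2 ^ (i - 1) * z)) +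
      (2 * s ^ 2 * L / (E * A * u)) * ((1 - (u / 4) ^ P) / (4 / u - 1)) +
      (2 * c ^ 2 * L / (G * A' * v)) * ((1 - (v / 4) ^ P) / (4 / v - 1)) := by
  have ratio_ne_one {x b : ℝ} (hb : b ≠ 0) (hx : x ≠ b) : x / b ≠ 1 :=
    fun h => hx ((div_eq_one_iff_eq hb).mp h)
  rw [Vdisp_eq_sum_range, sum_Icc_one_eq_sum_range, ← inv_div a 16, ← inv_div u 4, ← inv_div v 4,
    ← mul_geom_sum_eq_div_inv_sub_one (by positivity) (ratio_ne_one (by norm_num) ha16),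
    ← mul_geom_sum_eq_div_inv_sub_one (by positivity) (ratio_ne_one (by norm_num) hu4),
    ← mul_geom_sum_eq_div_inv_sub_one (by positivity) (ratio_ne_one (by norm_num) hv4)]
  simp only [Nat.add_sub_cancel]
  linear_combination
    (-5 / 12 * (c ^ 2 * L ^ 3 / (E * I)) * ∑ n ∈ range P, (a / 16) ^ n) * mul_inv_cancel₀ ha.ne' -
    (s ^ 2 * L / (2 * (E * A)) * ∑ n ∈ range P, (u / 4) ^ n) * mul_inv_cancel₀ hu.ne' -
    (c ^ 2 * L / (2 * (G * A')) * ∑ n ∈ range P, (v / 4) ^ n) * mul_inv_cancel₀ hv.ne'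

/-- Closed form of the vertical displacement of the end node at `z` for a finite structure
with `P` levels, when `a ≠ 16`, `u ≠ 4`, `v ≠ 4`. -/
theorem vertical_displacement_finite (c s L E I A A' G a u v : ℝ)
    (hc : 0 < c) (hs : 0 < s) (hL : 0 < L) (hE : 0 < E) (hI : 0 < I)
    (hA : 0 < A) (hA' : 0 < A') (hG : 0 < G)
    (ha : 0 < a) (hu : 0 < u) (hv : 0 < v)
    (ha16 : a ≠ 16) (hu4 : u ≠ 4) (hv4 : v ≠ 4) (z : ℝ) (P : ℕ) (hP : 1 ≤ P) :
    Vdisp c s L E I A A' G a u v z P =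
      (20 * c ^ 2 * L ^ 3 / (3 * E * I * a)) * ((1 - (a / 16) ^ P) / (16 / a - 1)) -
        (c ^ 2 * L ^ 3 / (E * I)) *
          (∑ i ∈ Finset.Icc 1 P, (a / 16) ^ (i - 1) * distNearInt (2 ^ (i - 1) * z)) +
      (2 * s ^ 2 * L / (E * A * u)) * ((1 - (u / 4) ^ P) / (4 / u - 1)) +
      (2 * c ^ 2 * L / (G * A' * v)) * ((1 - (v / 4) ^ P) / (4 / v - 1)) :=
  vertical_displacement_finite_general c s L E I A A' G a u v ha hu hv ha16 hu4 hv4 z P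
end
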